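/- For n ≥ 2, the matrix R*_n factors as R*_n = S_n T_n, where R*_n, S_n, T_n are the n×n matrices defined by: (R*_n)_{ij} = 1 if i ∥ j or j = 1, else 0; (S_n)_{ij} = 1 if i ∥ j, else 0; (T_n)_{i1} = M*(n/i, i), (T_n)_{ii} = 1 for i ≥ 2, and (T_n)_{ij} = 0 otherwise. -/

import Mathlib

/-- `d` is a unitary divisor of `j`: `d ∣ j` and `gcd(d, j/d) = 1`. -/
def UnitaryDvd (d j : ℕ) : Prop := d ∣ j ∧ Nat.Coprime d (j / d)

instance : ∀ d j, Decidable (UnitaryDvd d j) := fun _ _ => instDecidableAnd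

/-- The unitary Möbius function `μ*(n) = (-1)^{ω(n)}`. -/
noncomputable def mustar (n : ℕ) : ℤ := (-1) ^ n.primeFactors.card

/-- `M*(x, k) = ∑_{d ≤ x, gcd(d,k)=1} μ*(d)`. -/
noncomputable def Mstar (x k : ℕ) : ℤ :=
  ∑ d ∈ (Finset.Icc 1 x).filter (fun d => Nat.Coprime d k), mustar d


/-!
Column `j ≥ 2` of `T_n` is the `j`-th unit vector, so those columns of `S_n T_n` and `R*_n`
agree. In column 1, `(S_n T_n)_{a1} = ∑_{a ∥ m ≤ n} M*(n/m, m)`. Expanding `M*` and putting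
`N = m d` turns the pairs `(m, d)` with `a ∥ m`, `gcd(d, m) = 1`, `m d ≤ n` into the pairs
`(N, d)` with `a ∥ N ≤ n` and `d ∥ N/a`. The unitary divisors of `b` correspond to the subsets
of its prime factors, so `∑_{d ∥ b} μ*(d) = [b = 1]`, and only `N = a` contributes.
-/
open Finset

section UnitaryDivisors

variable {a b d k : ℕ}

lemma unitaryDvd_mul_right_iff (ha : a ≠ 0) : UnitaryDvd a (a * k) ↔ a.Coprime k := by
  simp [UnitaryDvd, Nat.mul_div_cancel_left k (Nat.pos_of_ne_zero ha)]

lemma unitaryDvd_self (ha : 0 < a) : UnitaryDvd a a := by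
  simpa using (unitaryDvd_mul_right_iff ha.ne' (k := 1)).2 (Nat.coprime_one_right a)

def unitaryDivisors (b : ℕ) : Finset ℕ := {d ∈ b.divisors | UnitaryDvd d b}

@[simp]
lemma mem_unitaryDivisors : d ∈ unitaryDivisors b ↔ UnitaryDvd d b ∧ b ≠ 0 := by
  simp only [unitaryDivisors, mem_filter, Nat.mem_divisors]
  exact ⟨fun h => ⟨h.2, h.1.2⟩, fun h => ⟨⟨h.1.1, h.2⟩, h.1⟩⟩

/-- The largest divisor of `b` all of whose prime factors satisfy `p`. -/
def unitaryPart (b : ℕ) (p : ℕ → Prop) [DecidablePred p] : ℕ :=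
  (b.factorization.filter p).prod (· ^ ·)

variable (p : ℕ → Prop) [DecidablePred p]

lemma factorization_unitaryPart : (unitaryPart b p).factorization = b.factorization.filter p :=
  Nat.factorization_prod_pow_eq_self_of_le_factorization <| by
    intro q
    rw [Finsupp.filter_apply]
    split_ifs
    · exact le_rfl
    · exact Nat.zero_le _

lemma primeFactors_unitaryPart : (unitaryPart b p).primeFactors = {q ∈ b.primeFactors | p q} := by
  rw [← Nat.support_factorization, factorization_unitaryPart, Finsupp.support_filter,
    Nat.support_factorization]

lemma unitaryPart_mul_unitaryPart_not (hb : b ≠ 0) :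
    unitaryPart b p * unitaryPart b (¬ p ·) = b := by
  rw [unitaryPart, unitaryPart, Finsupp.prod_filter_mul_prod_filter_not,
    Nat.prod_factorization_pow_eq_self hb]

lemma unitaryDvd_unitaryPart (hb : b ≠ 0) : UnitaryDvd (unitaryPart b p) b := by
  have hprod := unitaryPart_mul_unitaryPart_not p hb
  have hpart : unitaryPart b p ≠ 0 := left_ne_zero_of_mul (hprod ▸ hb)
  have hcop : (unitaryPart b p).Coprime (unitaryPart b (¬ p ·)) := by
    rw [← Nat.disjoint_primeFactors hpart (right_ne_zero_of_mul (hprod ▸ hb)),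
      primeFactors_unitaryPart, primeFactors_unitaryPart]
    exact disjoint_filter_filter_not _ _ _
  simpa [hprod] using (unitaryDvd_mul_right_iff hpart).2 hcop

lemma unitaryPart_primeFactors (h : UnitaryDvd d b) (hb : b ≠ 0) :
    unitaryPart b (· ∈ d.primeFactors) = d := by
  obtain ⟨⟨e, rfl⟩, hcop⟩ := h
  have hd : d ≠ 0 := left_ne_zero_of_mul hb
  rw [Nat.mul_div_cancel_left e (Nat.pos_of_ne_zero hd)] at hcop
  refine Nat.eq_of_factorization_eq (ne_zero_of_dvd_ne_zero hb (unitaryDvd_unitaryPart _ hb).1) hd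
    fun q => ?_
  rw [factorization_unitaryPart]
  by_cases hq : q ∈ d.primeFactors
  · have hqe : ¬ q ∣ e := fun hqe =>
      (Nat.prime_of_mem_primeFactors hq).one_lt.ne' (Nat.eq_one_of_dvd_coprimes hcop
        (Nat.dvd_of_mem_primeFactors hq) hqe)
    rw [Finsupp.filter_apply_pos _ _ hq, Nat.factorization_mul hd (right_ne_zero_of_mul hb),
      Finsupp.add_apply, Nat.factorization_eq_zero_of_not_dvd hqe, add_zero]
  · rw [Finsupp.filter_apply_neg _ _ hq,
      Finsupp.notMem_support_iff.mp (by rwa [Nat.support_factorization])]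

theorem sum_mustar_unitaryDivisors (hb : b ≠ 0) :
    ∑ d ∈ unitaryDivisors b, mustar d = if b = 1 then 1 else 0 := by
  calc ∑ d ∈ unitaryDivisors b, mustar d
      = ∑ S ∈ b.primeFactors.powerset, (-1 : ℤ) ^ S.card := by
        refine sum_nbij' (·.primeFactors) (fun S => unitaryPart b (· ∈ S)) (fun d hd => ?_)
          (fun S hS => ?_) (fun d hd => ?_) (fun S hS => ?_) fun _ _ => rfl
        · exact mem_powerset.2 <| Nat.primeFactors_mono (mem_unitaryDivisors.1 hd).1.1 hb
        · exact mem_unitaryDivisors.2 ⟨unitaryDvd_unitaryPart _ hb, hb⟩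
        · exact unitaryPart_primeFactors (mem_unitaryDivisors.1 hd).1 hb
        · rw [primeFactors_unitaryPart, filter_mem_eq_inter, inter_eq_right.2 (mem_powerset.1 hS)]
    _ = if b = 1 then 1 else 0 := by
        simp [sum_powerset_neg_one_pow_card, Nat.primeFactors_eq_empty, hb]

end UnitaryDivisors

lemma unitaryDvd_mul_and_unitaryDvd_div_iff {a m d : ℕ} (hm : m ≠ 0) (hd : d ≠ 0) :
    UnitaryDvd a (m * d) ∧ UnitaryDvd d (m * d / a) ↔ UnitaryDvd a m ∧ d.Coprime m := by
  rcases eq_or_ne a 0 with rfl | ha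
  · simp [UnitaryDvd, hm, hd]
  constructor
  · rintro ⟨⟨hamd, hcop⟩, hdq, hdcop⟩
    have had : a.Coprime d := hcop.coprime_dvd_right hdq
    obtain ⟨k, rfl⟩ := had.dvd_of_dvd_mul_right hamd
    rw [mul_assoc, Nat.mul_div_cancel_left _ (Nat.pos_of_ne_zero ha)] at hcop hdq hdcop
    rw [Nat.mul_div_cancel _ (Nat.pos_of_ne_zero hd)] at hdcop
    exact ⟨(unitaryDvd_mul_right_iff ha).2 (Nat.Coprime.coprime_mul_right_right hcop),
      Nat.Coprime.mul_right had.symm hdcop⟩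
  · rintro ⟨⟨⟨k, rfl⟩, hcop⟩, hdm⟩
    rw [Nat.mul_div_cancel_left _ (Nat.pos_of_ne_zero ha)] at hcop
    rw [mul_assoc, Nat.mul_div_cancel_left _ (Nat.pos_of_ne_zero ha),
      unitaryDvd_mul_right_iff ha, mul_comm k d, unitaryDvd_mul_right_iff hd]
    exact ⟨(Nat.Coprime.coprime_mul_right_right hdm).symm.mul_right hcop,
      Nat.Coprime.coprime_mul_left_right hdm⟩

theorem sum_sum_coprime_eq_sum_sum_unitaryDivisors {M : Type*} [AddCommMonoid M] (f : ℕ → M)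
    (n a : ℕ) :
    ∑ m ∈ Icc 1 n with UnitaryDvd a m, ∑ d ∈ Icc 1 (n / m) with d.Coprime m, f d =
      ∑ N ∈ Icc 1 n with UnitaryDvd a N, ∑ d ∈ unitaryDivisors (N / a), f d := by
  rw [sum_sigma', sum_sigma']
  refine sum_nbij' (fun x => ⟨x.1 * x.2, x.2⟩) (fun x => ⟨x.1 / x.2, x.2⟩) ?_ ?_ ?_ ?_
    fun _ _ => rfl
  all_goals
    intro ⟨x, y⟩ h
    simp only [mem_sigma, mem_filter, mem_Icc, mem_unitaryDivisors] at h ⊢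
  · obtain ⟨⟨⟨hm, hmn⟩, ham⟩, ⟨hd, hdn⟩, hdm⟩ := h
    have hmd : x * y ≤ n := by rwa [mul_comm, ← Nat.le_div_iff_mul_le hm]
    obtain ⟨hamd, hdq⟩ :=
      (unitaryDvd_mul_and_unitaryDvd_div_iff (by omega) (by omega)).2 ⟨ham, hdm⟩
    have hq : x * y / a ≠ 0 :=
      (Nat.div_pos (Nat.le_of_dvd (Nat.mul_pos hm hd) hamd.1) (Nat.pos_of_dvd_of_pos ham.1 hm)).ne'
    exact ⟨⟨⟨Nat.mul_pos hm hd, hmd⟩, hamd⟩, hdq, hq⟩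
  · obtain ⟨⟨⟨hN, hNn⟩, haN⟩, hdq, hq⟩ := h
    have hd : 0 < y := Nat.pos_of_ne_zero (ne_zero_of_dvd_ne_zero hq hdq.1)
    have hNd : x / y * y = x := Nat.div_mul_cancel (hdq.1.trans (Nat.div_dvd_of_dvd haN.1))
    have hm : 0 < x / y := Nat.pos_of_ne_zero fun h => by simp [h] at hNd; omega
    obtain ⟨ham, hdm⟩ :=
      (unitaryDvd_mul_and_unitaryDvd_div_iff hm.ne' hd.ne').1 (by rw [hNd]; exact ⟨haN, hdq⟩)
    refine ⟨⟨⟨hm, (Nat.div_le_self x y).trans hNn⟩, ham⟩, ⟨hd, ?_⟩, hdm⟩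
    rwa [Nat.le_div_iff_mul_le hm, mul_comm, hNd]
  · simp [Nat.mul_div_cancel x h.2.1.1]
  · simp [Nat.div_mul_cancel (h.2.1.1.trans (Nat.div_dvd_of_dvd h.1.2.1))]

theorem sum_Mstar_div_of_unitaryDvd_eq_one {n a : ℕ} (ha : 0 < a) (han : a ≤ n) :
    ∑ m ∈ Icc 1 n with UnitaryDvd a m, Mstar (n / m) m = 1 := by
  calc ∑ m ∈ Icc 1 n with UnitaryDvd a m, Mstar (n / m) m
      = ∑ N ∈ Icc 1 n with UnitaryDvd a N, ∑ d ∈ unitaryDivisors (N / a), mustar d :=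
        sum_sum_coprime_eq_sum_sum_unitaryDivisors mustar n a
    _ = ∑ N ∈ Icc 1 n with UnitaryDvd a N, if a = N then 1 else 0 := by
        refine sum_congr rfl fun N hN => ?_
        obtain ⟨⟨hN, -⟩, ⟨k, rfl⟩, -⟩ := by simpa only [mem_filter, mem_Icc] using hN
        rw [Nat.mul_div_cancel_left k ha, sum_mustar_unitaryDivisors (by rintro rfl; omega)]
        simp [ha.ne']
    _ = 1 := by
        rw [sum_ite_eq, if_pos (mem_filter.2 ⟨mem_Icc.2 ⟨ha, han⟩, unitaryDvd_self ha⟩)]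

lemma sum_fin_succ_eq_sum_Icc {M : Type*} [AddCommMonoid M] (g : ℕ → M) (n : ℕ) :
    ∑ k : Fin n, g (k + 1) = ∑ m ∈ Icc 1 n, g m := by
  rw [Fin.sum_univ_eq_sum_range (fun k => g (k + 1)), range_eq_Ico, sum_Ico_add' g, zero_add,
    Ico_add_one_right_eq_Icc]

theorem redheffer_star_factorization_general (n : ℕ) :
    (Matrix.of fun i j : Fin n =>
        if UnitaryDvd ((i : ℕ) + 1) ((j : ℕ) + 1) ∨ (j : ℕ) + 1 = 1 then (1 : ℤ) else 0) =
      (Matrix.of fun i j : Fin n =>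
          if UnitaryDvd ((i : ℕ) + 1) ((j : ℕ) + 1) then (1 : ℤ) else 0) *
        (Matrix.of fun i j : Fin n =>
          if (j : ℕ) = 0 then Mstar (n / ((i : ℕ) + 1)) ((i : ℕ) + 1)
          else if i = j then 1 else 0) := by
  ext i j
  simp only [Matrix.mul_apply, Matrix.of_apply]
  by_cases hj : (j : ℕ) = 0
  · simp only [hj, zero_add, or_true, if_true, boole_mul]
    rw [sum_fin_succ_eq_sum_Icc (fun m => if UnitaryDvd (i + 1) m then Mstar (n / m) m else 0),
      ← sum_filter]
    exact (sum_Mstar_div_of_unitaryDvd_eq_one i.succ_pos i.isLt).symm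
  · simp [hj]

theorem redheffer_star_factorization (n : ℕ) (hn : 2 ≤ n) :
    (Matrix.of fun i j : Fin n =>
        if UnitaryDvd ((i : ℕ) + 1) ((j : ℕ) + 1) ∨ (j : ℕ) + 1 = 1 then (1 : ℤ) else 0) =
      (Matrix.of fun i j : Fin n =>
          if UnitaryDvd ((i : ℕ) + 1) ((j : ℕ) + 1) then (1 : ℤ) else 0) *
        (Matrix.of fun i j : Fin n =>
          if (j : ℕ) = 0 then Mstar (n / ((i : ℕ) + 1)) ((i : ℕ) + 1)
          else if i = j then 1 else 0) :=
  redheffer_star_factorization_general n
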